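/- arXiv:1703.08151 — 4 statements merged into one kernel-verified Lean document; each statement's English description precedes it below -/
import Mathlib

section
/- Let 𝒳 be a finite set, let X be an 𝒳-valued random variable, and let U_𝒳 be uniformly distributed on 𝒳. Writing Δ = SD(X, U_𝒳) for the statistical distance between X and U_𝒳, the collision probability of X satisfies Col(X) ≥ (1 + 4Δ²)/|𝒳|. -/
/-! The excess `Col(X) - 1/|𝒳|` of the collision probability over its minimum is exactly the squared
`ℓ²`-distance `∑ (w x - 1/|𝒳|)²` from uniform, and by Cauchy–Schwarz the squared `ℓ²`-norm of a vector
on `𝒳` is at least `1/|𝒳|` times its squared `ℓ¹`-norm, which is `4Δ²` here. -/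

open Finset

variable {ι : Type*} [Fintype ι]

theorem card_pos_of_sum_eq_one {w : ι → ℝ} (hsum : ∑ i, w i = 1) : (0 : ℝ) < Fintype.card ι := by
  have : (univ : Finset ι).Nonempty := nonempty_of_sum_ne_zero (by rw [hsum]; exact one_ne_zero)
  exact_mod_cast card_pos.2 this

theorem sq_sum_abs_le_card_mul_sum_sq (f : ι → ℝ) :
    (∑ i, |f i|) ^ 2 ≤ Fintype.card ι * ∑ i, f i ^ 2 := by
  simpa only [sq_abs, card_univ] using sq_sum_le_card_mul_sum_sq (s := univ) (f := fun i ↦ |f i|)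

theorem sum_sq_sub_inv_card {w : ι → ℝ} (hsum : ∑ i, w i = 1) :
    ∑ i, (w i - 1 / (Fintype.card ι : ℝ)) ^ 2 = ∑ i, w i ^ 2 - 1 / (Fintype.card ι : ℝ) := by
  have hn := (card_pos_of_sum_eq_one hsum).ne'
  simp only [sub_sq, sum_add_distrib, sum_sub_distrib, ← sum_mul, ← mul_sum, hsum, sum_const,
    card_univ, nsmul_eq_mul]
  field_simp
  ring

theorem collision_ge_of_statDist_general (𝒳 : Type) [Fintype 𝒳]
    (w : 𝒳 → ℝ) (hsum : ∑ x, w x = 1) :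
    (1 + 4 * ((1 / 2) * ∑ x, |w x - 1 / (Fintype.card 𝒳 : ℝ)|) ^ 2) / (Fintype.card 𝒳 : ℝ)
      ≤ ∑ x, (w x) ^ 2 := by
  set n : ℝ := (Fintype.card 𝒳 : ℝ)
  have hn : 0 < n := card_pos_of_sum_eq_one hsum
  set S := ∑ x, |w x - 1 / n|
  have hS : S ^ 2 / n ≤ ∑ x, w x ^ 2 - 1 / n := by
    rw [div_le_iff₀' hn, ← sum_sq_sub_inv_card hsum]
    exact sq_sum_abs_le_card_mul_sum_sq fun x ↦ w x - 1 / n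
  calc (1 + 4 * ((1 / 2) * S) ^ 2) / n = 1 / n + S ^ 2 / n := by ring
    _ ≤ ∑ x, w x ^ 2 := by linarith

/-- For a random variable `X` on a finite set `𝒳` with mass function `w`,
writing `Δ` for the statistical distance between `X` and the uniform distribution `U_𝒳`,
the collision probability satisfies `Col(X) ≥ (1 + 4Δ²)/|𝒳|`. -/
theorem collision_ge_of_statDist (𝒳 : Type) [Fintype 𝒳]
    (w : 𝒳 → ℝ) (hw : ∀ x, 0 ≤ w x) (hsum : ∑ x, w x = 1) :
    (1 + 4 * ((1 / 2) * ∑ x, |w x - 1 / (Fintype.card 𝒳 : ℝ)|) ^ 2) / (Fintype.card 𝒳 : ℝ)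
      ≤ ∑ x, (w x) ^ 2 :=
  collision_ge_of_statDist_general 𝒳 w hsum
end

section
/- (Winterhof bound) Let p be a prime, n ≥ 1, and q = p^n. Let ψ be a nontrivial additive character of F_q and let V be an additive subgroup of F_q. Then ∑_{a∈F_q} |∑_{x∈V} ψ(a·x)| ≤ p^n. -/
/-!
Every inner sum `∑_{x ∈ V} ψ (a x)` is the sum of a character of `V`, so it equals `|V|` or `0`;
in particular it is a nonnegative real and the sum of the absolute values is the sum itself.
Exchanging the order of summation and using orthogonality of the nontrivial characters
`a ↦ ψ (a x)`, `x ≠ 0`, only `x = 0` survives, so the total is exactly `|F|`.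
-/

namespace AddChar

open Finset

theorem ofReal_norm_sum_eq_sum {A : Type*} [AddGroup A] [Fintype A] (φ : AddChar A ℂ) :
    ((‖∑ x, φ x‖ : ℝ) : ℂ) = ∑ x, φ x := by
  classical
  rw [sum_eq_ite]
  split_ifs <;> simp

variable {R : Type*} [CommRing R] [Fintype R] {ψ : AddChar R ℂ}

theorem sum_sum_addSubgroup_mul_eq_card (hψ : ψ.IsPrimitive) (V : AddSubgroup R) [Fintype V] :
    ∑ a : R, ∑ x : V, ψ (a * x) = Fintype.card R := by
  classical
  have horth (x : V) : ∑ a : R, ψ (a * x) = if x = 0 then (Fintype.card R : ℂ) else 0 := by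
    simp [sum_mulShift _ hψ]
  rw [sum_comm]
  simp [horth]

theorem sum_norm_sum_addSubgroup_mul_eq_card (hψ : ψ.IsPrimitive) (V : AddSubgroup R)
    [Fintype V] : ∑ a : R, ‖∑ x : V, ψ (a * x)‖ = Fintype.card R := by
  have hnorm (a : R) : ((‖∑ x : V, ψ (a * x)‖ : ℝ) : ℂ) = ∑ x : V, ψ (a * x) :=
    ofReal_norm_sum_eq_sum ((ψ.mulShift a).compAddMonoidHom V.subtype)
  have hsum : ((∑ a : R, ‖∑ x : V, ψ (a * x)‖ : ℝ) : ℂ) = Fintype.card R := by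
    push_cast
    simp_rw [hnorm]
    exact sum_sum_addSubgroup_mul_eq_card hψ V
  exact_mod_cast hsum

end AddChar

theorem winterhof_bound_general (p n : ℕ)
    (F : Type) [Field F] [Fintype F]
    (hcard : Fintype.card F = p ^ n)
    (ψ : AddChar F ℂ) (hψ : ψ ≠ 1) (V : AddSubgroup F)
    [Fintype V] :
    ∑ a : F, ‖∑ x : V, ψ (a * (x : F))‖ ≤ (p : ℝ) ^ n := by
  rw [AddChar.sum_norm_sum_addSubgroup_mul_eq_card (.of_ne_one hψ) V, hcard]
  exact (Nat.cast_pow p n).le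

/-- Winterhof bound: for a prime `p`, `n ≥ 1`, a finite field `F` with
`p ^ n` elements, a nontrivial additive character `ψ` of `F`, and an additive subgroup
`V` of `F`, one has `∑_{a ∈ F} |∑_{x ∈ V} ψ (a x)| ≤ p ^ n`. -/
theorem winterhof_bound (p n : ℕ) (hp : p.Prime) (hn : 1 ≤ n)
    (F : Type) [Field F] [Fintype F] [DecidableEq F]
    (hcard : Fintype.card F = p ^ n)
    (ψ : AddChar F ℂ) (hψ : ψ ≠ 1) (V : AddSubgroup F)
    [Fintype V] :
    ∑ a : F, ‖∑ x : V, ψ (a * (x : F))‖ ≤ (p : ℝ) ^ n :=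
  winterhof_bound_general p n F hcard ψ hψ V
end

section
/- (Mordell's bound) There exists a constant C > 0 such that for every prime power q, every nontrivial additive character ψ of F_q, and every polynomial P ∈ F_q[X] of degree d with 1 ≤ d < char(F_q), one has |∑_{x∈F_q} ψ(P(x))| ≤ C · d · q^{1 − 1/(2d)}. -/
/-!
Mordell's moment method. Write `S(Q) = ∑ₓ ψ(Q x)`. For `a ≠ 0` the substitution `x ↦ a x + b`
does not change `S(P)`. Since `P` has no nonzero period when `d < char F`, the polynomial
`P(aX + b)` determines `b` from `a`, and its leading coefficient determines `a^d`; so each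
polynomial arises from at most `d` pairs `(a, b)`, and
`q (q - 1) |S(P)|^{2d} ≤ d ∑_Q |S(Q)|^{2d}`, the sum running over all `Q` of degree `≤ d`.
Expanding the `2d`-th powers and using orthogonality of characters, this moment is `q^{d+1}`
times the number of pairs of `d`-tuples with equal power sums of orders `≤ d`. As `d < char F`,
Newton's identities make such tuples permutations of each other, so there are at most `q^d d!`
pairs, and `|S(P)|^{2d} ≤ 2d · d! · q^{2d-1} ≤ (2d)^{2d} q^{2d-1}`.
-/

open Finset Polynomial

namespace AddChar

lemma map_sum_eq_prod {A M ι : Type*} [AddCommMonoid A] [CommMonoid M] (ψ : AddChar A M)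
    (s : Finset ι) (f : ι → A) : ψ (∑ i ∈ s, f i) = ∏ i ∈ s, ψ (f i) := by
  classical
  induction s using Finset.induction_on with
  | empty => simp
  | insert a s ha ih => rw [sum_insert ha, prod_insert ha, map_add_eq_mul, ih]

lemma sum_apply_sum_mul_eq_ite {F ι : Type*} [Field F] [Fintype F] [DecidableEq F] [Fintype ι]
    [DecidableEq ι] {ψ : AddChar F ℂ} (hψ : ψ ≠ 1) (c : ι → F) :
    ∑ v : ι → F, ψ (∑ k, v k * c k) =
      if c = 0 then (Fintype.card F : ℂ) ^ Fintype.card ι else 0 := by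
  simp_rw [ψ.map_sum_eq_prod]
  rw [← Fintype.prod_sum fun k t => ψ (t * c k)]
  simp_rw [sum_mulShift _ (IsPrimitive.of_ne_one hψ)]
  split_ifs with hc
  · simp [hc]
  · obtain ⟨k, hk⟩ := Function.ne_iff.mp hc
    exact prod_eq_zero (mem_univ k) (by simpa using hk)

lemma ofReal_norm_sum_apply_pow_two_mul {G α : Type*} [AddCommGroup G] [Finite G] [Fintype α]
    (ψ : AddChar G ℂ) (g : α → G) (n : ℕ) :
    ((‖∑ t, ψ (g t)‖ ^ (2 * n) : ℝ) : ℂ) =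
      ∑ p : (Fin n → α) × (Fin n → α), ψ (∑ i, g (p.1 i) - ∑ i, g (p.2 i)) := by
  have hconj : (starRingEnd ℂ) (∑ t, ψ (g t)) = ∑ t, ψ (-g t) := by
    simp [map_neg_eq_conj]
  push_cast
  rw [pow_mul, ← Complex.mul_conj', mul_pow, hconj, Fintype.sum_pow, Fintype.sum_pow,
    sum_mul_sum, Fintype.sum_prod_type]
  refine sum_congr rfl fun x _ => sum_congr rfl fun y _ => ?_
  rw [← ψ.map_sum_eq_prod, ← ψ.map_sum_eq_prod, ← map_add_eq_mul, sum_neg_distrib,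
    sub_eq_add_neg]

theorem sum_norm_sum_pow_two_mul_eq {F ι : Type*} [Field F] [Fintype F] [DecidableEq F]
    [Fintype ι] [DecidableEq ι] {ψ : AddChar F ℂ} (hψ : ψ ≠ 1) (f : ι → F → F) (n : ℕ) :
    ∑ v : ι → F, ‖∑ t, ψ (∑ k, v k * f k t)‖ ^ (2 * n) =
      (Fintype.card F : ℝ) ^ Fintype.card ι *
        #{p : (Fin n → F) × (Fin n → F) | ∀ k, ∑ i, f k (p.1 i) = ∑ i, f k (p.2 i)} := by
  have hlin (v : ι → F) (x y : Fin n → F) :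
      ∑ i, ∑ k, v k * f k (x i) - ∑ i, ∑ k, v k * f k (y i) =
        ∑ k, v k * (∑ i, f k (x i) - ∑ i, f k (y i)) := by
    simp only [mul_sub, sum_sub_distrib, mul_sum]
    rw [sum_comm (γ := ι), sum_comm (γ := ι)]
  rw [← Complex.ofReal_inj, Complex.ofReal_sum]
  simp_rw [ofReal_norm_sum_apply_pow_two_mul, hlin]
  rw [sum_comm]
  simp_rw [sum_apply_sum_mul_eq_ite hψ, funext_iff, Pi.zero_apply, sub_eq_zero]
  rw [sum_ite, sum_const_zero, add_zero, sum_const, nsmul_eq_mul, mul_comm]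
  norm_cast

end AddChar

section PowerSums

variable {F σ : Type*} [Field F] [Fintype σ]

lemma esymm_map_eq_of_sum_pow_eq {x y : σ → F} {m : ℕ} (hm : m < ringChar F)
    (h : ∀ k ≤ m, ∑ i, x i ^ k = ∑ i, y i ^ k) :
    ∀ k ≤ m, (univ.val.map x).esymm k = (univ.val.map y).esymm k := by
  intro k
  induction k using Nat.strong_induction_on with
  | _ k ih =>
  intro hk
  rcases k.eq_zero_or_pos with rfl | hk0
  · simp [Multiset.esymm]
  have newton (z : σ → F) :=
    congrArg (MvPolynomial.aeval z) (MvPolynomial.mul_esymm_eq_sum σ F k)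
  simp only [map_mul, map_sum, map_pow, map_neg, map_one, map_natCast,
    MvPolynomial.aeval_esymm_eq_multiset_esymm, MvPolynomial.psum, MvPolynomial.aeval_X]
    at newton
  have hkF : (k : F) ≠ 0 := fun h0 =>
    absurd (Nat.le_of_dvd hk0 ((ringChar.spec F k).1 h0)) (by omega)
  refine mul_left_cancel₀ hkF ((newton x).trans (Eq.trans ?_ (newton y).symm))
  refine congrArg _ (sum_congr rfl fun a ha => ?_)
  rw [mem_filter, HasAntidiagonal.mem_antidiagonal] at ha
  rw [ih a.1 ha.2 (by omega), h a.2 (by omega)]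

lemma multiset_map_eq_of_sum_pow_eq {x y : σ → F} (hσ : Fintype.card σ < ringChar F)
    (h : ∀ k ≤ Fintype.card σ, ∑ i, x i ^ k = ∑ i, y i ^ k) :
    univ.val.map x = univ.val.map y := by
  have hprod : ((univ.val.map x).map fun t => X - C t).prod =
      ((univ.val.map y).map fun t => X - C t).prod := by
    simp only [Multiset.prod_X_sub_X_eq_sum_esymm, Multiset.card_map, card_val]
    exact sum_congr rfl fun j hj => by
      rw [esymm_map_eq_of_sum_pow_eq hσ h j (Nat.lt_succ_iff.mp (mem_range.mp hj))]
  simpa only [roots_multiset_prod_X_sub_C] using congrArg roots hprod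

end PowerSums

lemma exists_perm_eq_comp_of_map_univ_eq {α : Type*} [LinearOrder α] {d : ℕ} {x y : Fin d → α}
    (h : univ.val.map x = univ.val.map y) : ∃ σ : Equiv.Perm (Fin d), y = x ∘ σ := by
  have hperm : List.Perm (List.ofFn y) (List.ofFn x) := by
    rw [← Multiset.coe_eq_coe, List.ofFn_eq_map, List.ofFn_eq_map, ← Multiset.map_coe,
      ← Multiset.map_coe]
    simpa [Finset.univ, Fintype.elems] using h.symm
  have hsorted : y ∘ Tuple.sort y = x ∘ Tuple.sort x :=
    List.ofFn_injective (List.Perm.eq_of_sortedLE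
      (Tuple.monotone_sort y).sortedLE_ofFn (Tuple.monotone_sort x).sortedLE_ofFn
      (((Tuple.sort y).ofFn_comp_perm y).trans
        (hperm.trans ((Tuple.sort x).ofFn_comp_perm x).symm)))
  refine ⟨(Tuple.sort y).symm.trans (Tuple.sort x), funext fun i => ?_⟩
  simpa using congrFun hsorted ((Tuple.sort y).symm i)

theorem card_filter_sum_pow_eq_le {F : Type*} [Field F] [Fintype F] [DecidableEq F] {d : ℕ}
    (hd : d < ringChar F) :
    #{p : (Fin d → F) × (Fin d → F) |
        ∀ k : Fin (d + 1), ∑ i, p.1 i ^ (k : ℕ) = ∑ i, p.2 i ^ (k : ℕ)} ≤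
      Fintype.card F ^ d * d.factorial := by
  let : LinearOrder F := LinearOrder.lift' _ (Fintype.equivFin F).injective
  calc _ ≤ #(univ : Finset ((Fin d → F) × Equiv.Perm (Fin d))) := by
        refine card_le_card_of_surjOn (fun p => (p.1, p.1 ∘ p.2)) fun p hp => ?_
        simp only [coe_filter, mem_univ, true_and, Set.mem_ofPred_eq] at hp
        obtain ⟨σ, hσ⟩ := exists_perm_eq_comp_of_map_univ_eq <| multiset_map_eq_of_sum_pow_eq
          (by simpa using hd) fun k hk => hp ⟨k, by simpa [Nat.lt_succ_iff] using hk⟩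
        exact ⟨(p.1, σ), mem_coe.2 (mem_univ _), by simp [← hσ]⟩
    _ = Fintype.card F ^ d * d.factorial := by simp [Fintype.card_perm]

lemma two_mul_mul_factorial_le_pow (d : ℕ) : 2 * d * d.factorial ≤ (2 * d) ^ (2 * d) := by
  rcases d.eq_zero_or_pos with rfl | hd
  · simp
  calc 2 * d * d.factorial ≤ 2 * d * d ^ d := by gcongr; exact d.factorial_le_pow
    _ = 2 ^ 1 * d ^ (d + 1) := by ring
    _ ≤ 2 ^ (2 * d) * d ^ (2 * d) := by gcongr <;> omega
    _ = (2 * d) ^ (2 * d) := (mul_pow ..).symm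

lemma le_mul_rpow_one_sub_one_div_of_pow_le {s A q : ℝ} {n : ℕ} (hn : n ≠ 0) (hA : 0 ≤ A)
    (hq : 0 < q) (h : s ^ n ≤ A ^ n * q ^ (n - 1)) :
    s ≤ A * q ^ (1 - 1 / (n : ℝ)) := by
  refine le_of_pow_le_pow_left₀ hn (by positivity) (h.trans_eq ?_)
  rw [mul_pow, ← Real.rpow_mul_natCast hq.le, one_sub_mul, one_div_mul_cancel (by simpa),
    ← Nat.cast_pred (Nat.pos_of_ne_zero hn), Real.rpow_natCast]

namespace Polynomial

variable {F : Type*} [Field F] {P : F[X]}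

lemma eq_zero_of_forall_eval_add_eq (hP : 0 < P.natDegree) (hch : P.natDegree < ringChar F)
    {c : F} (h : ∀ y, P.eval (y + c) = P.eval y) : c = 0 := by
  classical
  by_contra hc
  set Q := P - C (P.eval 0)
  have hQ : Q.natDegree = P.natDegree := natDegree_sub_C
  have hQ0 : Q ≠ 0 := fun h0 => by rw [h0, natDegree_zero] at hQ; omega
  have hroot (n : ℕ) : Q.IsRoot (n * c) := by
    induction n with
    | zero => simp [Q]
    | succ n ih => simpa [Q, add_mul, h] using ih
  have hinj : Set.InjOn (fun n : ℕ => (n : F) * c) (range (P.natDegree + 1)) :=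
    fun a ha b hb hab => CharP.natCast_injOn_Iio F (ringChar F)
      (show a < ringChar F by have := mem_range.1 ha; omega)
      (show b < ringChar F by have := mem_range.1 hb; omega)
      (mul_right_cancel₀ hc hab)
  have hcard := card_le_degree_of_subset_roots (p := Q)
    (Z := (range (P.natDegree + 1)).image fun n : ℕ => (n : F) * c) fun z hz => by
      obtain ⟨n, -, rfl⟩ := mem_image.1 (mem_def.2 hz)
      exact (mem_roots hQ0).2 (hroot n)
  rw [card_image_of_injOn hinj, card_range, hQ] at hcard
  omega

lemma eq_of_comp_affine_eq (hP : 0 < P.natDegree) (hch : P.natDegree < ringChar F) {a b b' : F}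
    (ha : a ≠ 0) (h : P.comp (C a * X + C b) = P.comp (C a * X + C b')) : b = b' := by
  refine sub_eq_zero.1 (eq_zero_of_forall_eval_add_eq hP hch fun y => ?_)
  have := congrArg (eval (a⁻¹ * (y - b'))) h
  simp only [eval_comp, eval_add, eval_mul, eval_C, eval_X, mul_inv_cancel_left₀ ha,
    sub_add_cancel] at this
  rwa [show y + (b - b') = y - b' + b by ring]

lemma pow_natDegree_eq_of_comp_affine_eq (hP : P ≠ 0) {a a' b b' : F} (ha : a ≠ 0) (ha' : a' ≠ 0)
    (h : P.comp (C a * X + C b) = P.comp (C a' * X + C b')) :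
    a ^ P.natDegree = a' ^ P.natDegree := by
  have := congrArg leadingCoeff h
  rw [leadingCoeff_comp (by rw [natDegree_linear ha]; simp),
    leadingCoeff_comp (by rw [natDegree_linear ha']; simp),
    leadingCoeff_linear ha, leadingCoeff_linear ha'] at this
  exact mul_left_cancel₀ (leadingCoeff_ne_zero.2 hP) this

variable [Fintype F] [DecidableEq F]

lemma card_filter_comp_affine_eq_le (hP : 0 < P.natDegree) (hch : P.natDegree < ringChar F)
    (Q : F[X]) :
    #{ab ∈ ({0}ᶜ : Finset F) ×ˢ univ | P.comp (C ab.1 * X + C ab.2) = Q} ≤ P.natDegree := by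
  set S := {ab ∈ ({0}ᶜ : Finset F) ×ˢ (univ : Finset F) | P.comp (C ab.1 * X + C ab.2) = Q}
  have hmem {ab : F × F} (hab : ab ∈ S) : ab.1 ≠ 0 ∧ P.comp (C ab.1 * X + C ab.2) = Q := by
    simpa [S] using hab
  obtain hS | ⟨ab₀, hab₀⟩ := S.eq_empty_or_nonempty
  · simp [hS]
  have hinj : Set.InjOn Prod.fst (S : Set (F × F)) := fun ab hab ab' hab' h1 =>
    Prod.ext h1 <| eq_of_comp_affine_eq hP hch (hmem hab).1 <| by
      rw [(hmem hab).2, h1, (hmem hab').2]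
  have himage : S.image Prod.fst ⊆ nthRootsFinset P.natDegree (ab₀.1 ^ P.natDegree) := by
    intro a ha
    obtain ⟨ab, hab, rfl⟩ := mem_image.1 ha
    rw [mem_nthRootsFinset hP]
    exact pow_natDegree_eq_of_comp_affine_eq (ne_zero_of_natDegree_gt hP) (hmem hab).1
      (hmem hab₀).1 ((hmem hab).2.trans (hmem hab₀).2.symm)
  calc #S = #(S.image Prod.fst) := (card_image_of_injOn hinj).symm
    _ ≤ #(nthRootsFinset P.natDegree (ab₀.1 ^ P.natDegree)) := card_le_card himage
    _ ≤ P.natDegree := by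
      rw [nthRootsFinset_def]
      exact (Multiset.toFinset_card_le _).trans (card_nthRoots _ _)

theorem sub_one_mul_card_mul_norm_pow_le_mul_sum (ψ : AddChar F ℂ) (hP : 0 < P.natDegree)
    (hch : P.natDegree < ringChar F) (n : ℕ) :
    (Fintype.card F - 1 : ℝ) * Fintype.card F * ‖∑ x, ψ (P.eval x)‖ ^ n ≤
      P.natDegree *
        ∑ v : Fin (P.natDegree + 1) → F, ‖∑ t, ψ (∑ k, v k * t ^ (k : ℕ))‖ ^ n := by
  set d := P.natDegree
  set U : Finset (F × F) := ({0}ᶜ : Finset F) ×ˢ univ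
  set φ : F × F → Fin (d + 1) → F := fun ab k => (P.comp (C ab.1 * X + C ab.2)).coeff k
  set M := fun v : Fin (d + 1) → F => ‖∑ t, ψ (∑ k, v k * t ^ (k : ℕ))‖ ^ n
  have hdeg {ab : F × F} (hab : ab ∈ U) : (P.comp (C ab.1 * X + C ab.2)).natDegree = d := by
    rw [natDegree_comp, natDegree_linear (by simpa [U] using hab), mul_one]
  have hM ⦃ab : F × F⦄ (hab : ab ∈ U) : M (φ ab) = ‖∑ x, ψ (P.eval x)‖ ^ n := by
    have ha : ab.1 ≠ 0 := by simpa [U] using hab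
    have heval (t : F) :
        ∑ k : Fin (d + 1), φ ab k * t ^ (k : ℕ) = P.eval (ab.1 * t + ab.2) := by
      rw [Fin.sum_univ_eq_sum_range (fun k => (P.comp (C ab.1 * X + C ab.2)).coeff k * t ^ k),
        ← eval_eq_sum_range' (by rw [hdeg hab]; omega)]
      simp [eval_comp]
    simp only [M, heval]
    congr 2
    exact Fintype.sum_bijective _
      ((Equiv.mulLeft₀ ab.1 ha).trans (Equiv.addRight ab.2)).bijective _ _ fun t => rfl
  have hfiber : ∀ v ∈ U.image φ, #{ab ∈ U | φ ab = v} ≤ d := by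
    intro v hv
    obtain ⟨ab₀, hab₀, rfl⟩ := mem_image.1 hv
    refine (card_le_card fun ab hab => ?_).trans
      (card_filter_comp_affine_eq_le hP hch (P.comp (C ab₀.1 * X + C ab₀.2)))
    obtain ⟨hab, hφ⟩ := mem_filter.1 hab
    refine mem_filter.2 ⟨hab, (ext_iff_natDegree_le (hdeg hab).le (hdeg hab₀).le).2 ?_⟩
    exact fun k hk => congrFun hφ ⟨k, Nat.lt_succ_of_le hk⟩
  have hU : (#U : ℝ) = (Fintype.card F - 1) * Fintype.card F := by
    simp [U, card_compl, Nat.cast_sub Fintype.card_pos]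
  calc (Fintype.card F - 1 : ℝ) * Fintype.card F * ‖∑ x, ψ (P.eval x)‖ ^ n
      = #U * ‖∑ x, ψ (P.eval x)‖ ^ n := by rw [hU]
    _ ≤ d * #(U.image φ) * ‖∑ x, ψ (P.eval x)‖ ^ n := by
      gcongr
      exact_mod_cast card_le_mul_card_image U d hfiber
    _ = d * ∑ v ∈ U.image φ, M v := by
      have hM' : ∀ v ∈ U.image φ, M v = ‖∑ x, ψ (P.eval x)‖ ^ n := forall_mem_image.2 hM
      rw [sum_congr rfl hM', sum_const, nsmul_eq_mul, mul_assoc]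
    _ ≤ d * ∑ v, M v := by
      gcongr
      exact subset_univ _

theorem sub_one_mul_card_mul_norm_pow_le_mul_factorial {ψ : AddChar F ℂ} (hψ : ψ ≠ 1)
    (hP : 0 < P.natDegree) (hch : P.natDegree < ringChar F) :
    (Fintype.card F - 1 : ℝ) * Fintype.card F * ‖∑ x, ψ (P.eval x)‖ ^ (2 * P.natDegree) ≤
      P.natDegree * P.natDegree.factorial * (Fintype.card F : ℝ) ^ (2 * P.natDegree + 1) := by
  have hmean := AddChar.sum_norm_sum_pow_two_mul_eq hψ
    (fun (k : Fin (P.natDegree + 1)) (t : F) => t ^ (k : ℕ)) P.natDegree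
  calc _ ≤ _ := sub_one_mul_card_mul_norm_pow_le_mul_sum ψ hP hch _
    _ = _ := by rw [hmean, Fintype.card_fin]
    _ ≤ P.natDegree * ((Fintype.card F : ℝ) ^ (P.natDegree + 1) *
          ((Fintype.card F : ℝ) ^ P.natDegree * P.natDegree.factorial)) := by
      gcongr
      -- `congr!` reconciles `Nat.decidableForallFin` with the generic `Fintype` instance
      exact_mod_cast (Eq.trans_le (by congr!) (card_filter_sum_pow_eq_le hch))
    _ = _ := by ring

theorem norm_sum_addChar_eval_pow_le {ψ : AddChar F ℂ} (hψ : ψ ≠ 1) (hP : 0 < P.natDegree)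
    (hch : P.natDegree < ringChar F) :
    ‖∑ x, ψ (P.eval x)‖ ^ (2 * P.natDegree) ≤
      (2 * P.natDegree) ^ (2 * P.natDegree) * (Fintype.card F : ℝ) ^ (2 * P.natDegree - 1) := by
  have hmoment := sub_one_mul_card_mul_norm_pow_le_mul_factorial hψ hP hch
  have hfact : (2 * P.natDegree * P.natDegree.factorial : ℝ) ≤
      (2 * P.natDegree) ^ (2 * P.natDegree) := mod_cast two_mul_mul_factorial_le_pow _
  have hq : (2 : ℝ) ≤ Fintype.card F := mod_cast Fintype.one_lt_card (α := F)
  set d := P.natDegree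
  set q : ℝ := (Fintype.card F : ℝ)
  set s := ‖∑ x, ψ (P.eval x)‖
  have hpow : q ^ (2 * d + 1) = q ^ (2 * d - 1) * q ^ 2 := by rw [← pow_add]; congr 1; omega
  refine le_of_mul_le_mul_right ?_ (by positivity : 0 < q ^ 2)
  calc s ^ (2 * d) * q ^ 2 ≤ 2 * ((q - 1) * q * s ^ (2 * d)) := by
        nlinarith [mul_nonneg (by positivity : 0 ≤ s ^ (2 * d) * q) (sub_nonneg.2 hq)]
    _ ≤ 2 * d * d.factorial * (q ^ (2 * d - 1) * q ^ 2) := by rw [← hpow]; linarith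
    _ ≤ (2 * d) ^ (2 * d) * q ^ (2 * d - 1) * q ^ 2 := by rw [← mul_assoc]; gcongr

end Polynomial

/-- Mordell's bound: there is a constant `C > 0` such that for every finite
field `F` (of prime power order `q`), every nontrivial additive character `ψ` of `F` and
every polynomial `P ∈ F[X]` of degree `d` with `1 ≤ d < char F`, one has
`|∑_{x ∈ F} ψ (P x)| ≤ C · d · q ^ (1 - 1/(2d))`. -/
theorem mordell_bound :
    ∃ C : ℝ, 0 < C ∧
      ∀ (F : Type) [Field F] [Fintype F] (ψ : AddChar F ℂ), ψ ≠ 1 →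
        ∀ (P : Polynomial F) (d : ℕ), P.natDegree = d → 1 ≤ d → d < ringChar F →
          ‖∑ x : F, ψ (P.eval x)‖
            ≤ C * d * (Fintype.card F : ℝ) ^ ((1 : ℝ) - 1 / (2 * (d : ℝ))) := by
  refine ⟨2, two_pos, fun F _ _ ψ hψ P d hdeg hd hch => ?_⟩
  classical
  subst hdeg
  refine (le_mul_rpow_one_sub_one_div_of_pow_le (by omega) (by positivity)
    (mod_cast Fintype.card_pos) (norm_sum_addChar_eval_pow_le hψ hd hch)).trans_eq ?_
  push_cast
  ring
end

section
/- There exists a constant C > 0 such that the following holds. Let p be an odd prime, let k ≥ 1 be an integer, let G be the set of monic polynomials in F_p[X] of degree 1 or 2, let U_G be uniformly distributed on G, let A = S_k(U_G) ∈ {0,1}^k, and let U_k be uniformly distributed on {0,1}^k. Then the statistical distance satisfies SD(A, U_k) ≤ C · √(2^k/p) · (1 + √(log₂ p)/(p + 1)). -/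
/-!
The map `u ↦ -u₁` (resp. `u ↦ -u₀`) sends `G` onto `𝔽_p` with every fibre of size `p + 1`:
the `p` quadratics `X² - bX + c` and the linear polynomial `X - b`. Hence `S_k(U_G)` has the
law of the `k` low bits of a uniform element of `𝔽_p`. Every residue class mod `2^k` meets
`{0, …, p - 1}` in `⌊p / 2^k⌋` or `⌊p / 2^k⌋ + 1` points, so each point probability is within
`1 / p` of `2^{-k}`. This gives `SD ≤ min (1, 2^k / (2p)) ≤ √(2^k / p)`, so `C = 1` works.
-/

open Polynomial Finset

lemma ite_natDegree_coeff_eq_nextCoeff {R δ : Type*} [Semiring R] {u : R[X]}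
    (hu : u.degree = 1 ∨ u.degree = 2) (f : R → δ) (d : δ) :
    (if u.natDegree = 2 then f (u.coeff 1) else if u.natDegree = 1 then f (u.coeff 0) else d) =
      f u.nextCoeff := by
  rcases hu with hd | hd
  · have h1 : u.natDegree = 1 := natDegree_eq_of_degree_eq_some hd
    simp [h1, nextCoeff_of_natDegree_pos]
  · have h2 : u.natDegree = 2 := natDegree_eq_of_degree_eq_some hd
    simp [h2, nextCoeff_of_natDegree_pos]

section MonicDegreeOneOrTwo

variable {R : Type*} [Ring R] [Nontrivial R]

lemma nextCoeff_X_sq_sub_C_mul_X_add_C (b c : R) : (X ^ 2 - C b * X + C c).nextCoeff = -b := by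
  rw [nextCoeff_of_natDegree_pos, (isMonicOfDegree_sub_add_two b c).natDegree_eq] <;>
    simp [(isMonicOfDegree_sub_add_two b c).natDegree_eq]

noncomputable def monicDegreeOneOrTwoEquiv :
    {u : R[X] // u.Monic ∧ (u.degree = 1 ∨ u.degree = 2)} ≃ R × Option R where
  toFun u := (-u.1.nextCoeff, if u.1.natDegree = 2 then some (u.1.coeff 0) else none)
  invFun
    | (b, some c) => ⟨X ^ 2 - C b * X + C c, (isMonicOfDegree_sub_add_two b c).monic,
        .inr (degree_eq_iff_natDegree_eq_of_pos two_pos |>.2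
          (isMonicOfDegree_sub_add_two b c).natDegree_eq)⟩
    | (b, none) => ⟨X - C b, monic_X_sub_C b, .inl (degree_X_sub_C b)⟩
  left_inv := by
    rintro ⟨u, hm, hd | hd⟩
    · obtain ⟨b, rfl⟩ := isMonicOfDegree_one_iff.1 ⟨natDegree_eq_of_degree_eq_some hd, hm⟩
      simp [nextCoeff_X_add_C, sub_eq_add_neg]
    · obtain ⟨b, c, rfl⟩ := isMonicOfDegree_two_iff'.1 ⟨natDegree_eq_of_degree_eq_some hd, hm⟩
      simp [nextCoeff_X_sq_sub_C_mul_X_add_C, (isMonicOfDegree_sub_add_two b c).natDegree_eq]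
  right_inv := by
    rintro ⟨b, _ | c⟩
    · simp [nextCoeff_X_sub_C]
    · simp [nextCoeff_X_sq_sub_C_mul_X_add_C, (isMonicOfDegree_sub_add_two b c).natDegree_eq]

lemma card_fiber_div_card_monicDegreeOneOrTwo [Finite R] {δ : Type*} (f : R → δ) (a : δ) :
    (Nat.card {u : R[X] // (u.Monic ∧ (u.degree = 1 ∨ u.degree = 2)) ∧ f (-u.nextCoeff) = a} :
        ℝ) / Nat.card {u : R[X] // u.Monic ∧ (u.degree = 1 ∨ u.degree = 2)} =
      Nat.card {x // f x = a} / Nat.card R := by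
  have hfiber : Nat.card {u : R[X] // (u.Monic ∧ (u.degree = 1 ∨ u.degree = 2)) ∧
      f (-u.nextCoeff) = a} = Nat.card ({x // f x = a} × Option R) :=
    Nat.card_congr <| (Equiv.subtypeSubtypeEquivSubtypeInter _ _).symm.trans <|
      (monicDegreeOneOrTwoEquiv.subtypeEquiv (q := fun z => f z.1 = a) fun _ => Iff.rfl).trans
        (Equiv.prodSubtypeFstEquivSubtypeProd (p := fun x => f x = a))
  rw [hfiber, Nat.card_congr monicDegreeOneOrTwoEquiv, Nat.card_prod, Nat.card_prod,
    Finite.card_option]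
  push_cast
  exact mul_div_mul_right _ _ (by positivity)

end MonicDegreeOneOrTwo

def lowBits (k n : ℕ) : Fin k → Bool := fun i => n.testBit i

lemma lowBits_mod_two_pow (k n : ℕ) : lowBits k (n % 2 ^ k) = lowBits k n :=
  funext fun i => by simp [lowBits, Nat.testBit_mod_two_pow, i.2]

lemma lowBits_injOn (k : ℕ) : Set.InjOn (lowBits k) (Set.Iio (2 ^ k)) := by
  intro m hm n hn h
  refine Nat.eq_of_testBit_eq fun i => ?_
  by_cases hi : i < k
  · exact congrFun h ⟨i, hi⟩
  · have hk : 2 ^ k ≤ 2 ^ i := Nat.pow_le_pow_right two_pos (not_lt.1 hi)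
    rw [Nat.testBit_lt_two_pow (hm.trans_le hk), Nat.testBit_lt_two_pow (hn.trans_le hk)]

lemma lowBits_eq_lowBits_iff {k m n : ℕ} : lowBits k m = lowBits k n ↔ m ≡ n [MOD 2 ^ k] := by
  rw [← lowBits_mod_two_pow k m, ← lowBits_mod_two_pow k n]
  exact ⟨lowBits_injOn k (Nat.mod_lt _ (by positivity)) (Nat.mod_lt _ (by positivity)),
    congrArg _⟩

lemma lowBits_surjective (k : ℕ) : Function.Surjective (lowBits k) := by
  have hinj : Function.Injective fun m : Fin (2 ^ k) => lowBits k m :=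
    fun m n h => Fin.ext (lowBits_injOn k m.2 n.2 h)
  intro a
  obtain ⟨m, hm⟩ := ((Fintype.bijective_iff_injective_and_card _).2 ⟨hinj, by simp⟩).2 a
  exact ⟨m, hm⟩

lemma ZMod.card_subtype_val_eq_count (p : ℕ) [NeZero p] (P : ℕ → Prop) [DecidablePred P] :
    Nat.card {x : ZMod p // P x.val} = Nat.count P p := by
  rw [Nat.count_eq_card_filter_range, ← Nat.card_eq_finsetCard]
  have val_cast {n : ℕ} (hn : n ∈ (Finset.range p).filter P) : (n : ZMod p).val = n :=
    ZMod.val_cast_of_lt (Finset.mem_range.1 (Finset.mem_filter.1 hn).1)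
  exact Nat.card_congr
    { toFun x := ⟨x.1.val, Finset.mem_filter.2 ⟨Finset.mem_range.2 x.1.val_lt, x.2⟩⟩
      invFun n := ⟨n.1, (val_cast n.2).symm ▸ (Finset.mem_filter.1 n.2).2⟩
      left_inv x := Subtype.ext (ZMod.natCast_zmod_val x.1)
      right_inv n := Subtype.ext (val_cast n.2) }

lemma card_lowBits_val_fiber_mem_Icc (p k : ℕ) [NeZero p] (a : Fin k → Bool) :
    Nat.card {x : ZMod p // lowBits k x.val = a} ∈ Set.Icc (p / 2 ^ k) (p / 2 ^ k + 1) := by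
  obtain ⟨m, rfl⟩ := lowBits_surjective k a
  simp_rw [lowBits_eq_lowBits_iff]
  rw [ZMod.card_subtype_val_eq_count p (· ≡ m [MOD 2 ^ k]), Nat.count_modEq_card _ (by positivity)]
  constructor <;> split_ifs <;> omega

lemma sum_card_lowBits_val_fiber (p k : ℕ) [NeZero p] :
    ∑ a : Fin k → Bool, Nat.card {x : ZMod p // lowBits k x.val = a} = p := by
  rw [← Nat.card_sigma, Nat.card_congr (Equiv.sigmaFiberEquiv _), Nat.card_zmod]

lemma abs_natCast_div_sub_inv_le {N n M : ℕ} (hn : 0 < n) (hM : 0 < M)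
    (hN : N ∈ Set.Icc (n / M) (n / M + 1)) : |(N : ℝ) / n - 1 / M| ≤ 1 / n := by
  have upper : N * M ≤ n + M := calc
    N * M ≤ (n / M + 1) * M := Nat.mul_le_mul_right M hN.2
    _ = n / M * M + M := by ring
    _ ≤ n + M := by grw [Nat.div_mul_le_self]
  have lower : n ≤ N * M + M := calc
    n ≤ n / M * M + M := (Nat.lt_div_mul_add hM).le
    _ ≤ N * M + M := by grw [hN.1]
  have hn' : (0 : ℝ) < n := by exact_mod_cast hn
  have hM' : (0 : ℝ) < M := by exact_mod_cast hM
  calc |(N : ℝ) / n - 1 / M| = |(N : ℝ) * M - n| / (n * M) := by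
        rw [div_sub_div _ _ hn'.ne' hM'.ne', abs_div, abs_of_pos (by positivity : (0 : ℝ) < n * M),
          mul_one]
    _ ≤ M / (n * M) := by
        gcongr
        rw [abs_le]
        constructor <;> linarith [(by exact_mod_cast upper : (N : ℝ) * M ≤ n + M),
          (by exact_mod_cast lower : (n : ℝ) ≤ N * M + M)]
    _ = 1 / n := by field_simp

lemma sum_abs_sub_le_two {ι : Type*} (s : Finset ι) {P Q : ι → ℝ} (hP : ∀ i ∈ s, 0 ≤ P i)
    (hQ : ∀ i ∈ s, 0 ≤ Q i) (hPs : ∑ i ∈ s, P i = 1) (hQs : ∑ i ∈ s, Q i = 1) :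
    ∑ i ∈ s, |P i - Q i| ≤ 2 := calc
  ∑ i ∈ s, |P i - Q i| ≤ ∑ i ∈ s, (P i + Q i) := sum_le_sum fun i hi => by
    simpa [abs_of_nonneg (hP i hi), abs_of_nonneg (hQ i hi)] using abs_sub (P i) (Q i)
  _ = 2 := by rw [sum_add_distrib, hPs, hQs]; norm_num

lemma half_sum_abs_div_sub_inv_card_le_sqrt {ι : Type*} [Fintype ι] (N : ι → ℕ) {n : ℕ}
    (hn : 0 < n) (hsum : ∑ i, N i = n)
    (hN : ∀ i, N i ∈ Set.Icc (n / Fintype.card ι) (n / Fintype.card ι + 1)) :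
    (1 / 2 : ℝ) * ∑ i, |(N i : ℝ) / n - 1 / Fintype.card ι| ≤ √(Fintype.card ι / n) := by
  set M := Fintype.card ι
  have hM : 0 < M := by
    rcases isEmpty_or_nonempty ι with _ | _
    · simp only [univ_eq_empty, sum_empty] at hsum
      omega
    · exact Fintype.card_pos
  have hn' : (0 : ℝ) < n := by exact_mod_cast hn
  have le_one : (1 / 2 : ℝ) * ∑ i, |(N i : ℝ) / n - 1 / M| ≤ 1 := by
    have := sum_abs_sub_le_two univ (P := fun i => (N i : ℝ) / n) (Q := fun _ => 1 / (M : ℝ))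
      (fun _ _ => by positivity) (fun _ _ => by positivity)
      (by rw [← sum_div, ← Nat.cast_sum, hsum, div_self hn'.ne'])
      (by rw [sum_const, card_univ, nsmul_eq_mul]; exact mul_one_div_cancel (by positivity))
    linarith
  have le_half : (1 / 2 : ℝ) * ∑ i, |(N i : ℝ) / n - 1 / M| ≤ 1 / 2 * (M / n) := by
    gcongr
    calc ∑ i, |(N i : ℝ) / n - 1 / M| ≤ ∑ _i : ι, 1 / (n : ℝ) :=
          sum_le_sum fun i _ => abs_natCast_div_sub_inv_le hn hM (hN i)
      _ = M / n := by simp [M, div_eq_mul_inv]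
  rw [Real.le_sqrt (by positivity) (by positivity)]
  nlinarith [show (0 : ℝ) ≤ (1 / 2 : ℝ) * ∑ i, |(N i : ℝ) / n - 1 / M| by positivity]

/-- there is a constant `C > 0` such that for every odd prime `p` and every
`k ≥ 1`, with `G` the set of monic polynomials of degree `1` or `2` over `F_p`, `U_G`
uniform on `G` and `A = S_k(U_G) ∈ {0,1}^k`, the statistical distance between `A` and the
uniform distribution on `{0,1}^k` is at most `C·√(2^k/p)·(1 + √(log₂ p)/(p+1))`. -/
theorem Sk_extractor_statDist :
    ∃ C : ℝ, 0 < C ∧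
      ∀ (p k : ℕ) (hp : p.Prime) (hodd : Odd p) (hk : 1 ≤ k),
        -- monic polynomials of degree 1 or 2 over `F_p`
        let G : Set (Polynomial (ZMod p)) := {u | u.Monic ∧ (u.degree = 1 ∨ u.degree = 2)}
        -- the `k` least significant bits of (the integer representative of) `x ∈ F_p`
        let lsb : ZMod p → (Fin k → Bool) := fun x i => (x.val).testBit (i : ℕ)
        -- the extractor `S_k`
        let S : Polynomial (ZMod p) → (Fin k → Bool) := fun u =>
          if u.natDegree = 2 then lsb (-(u.coeff 1))
          else if u.natDegree = 1 then lsb (-(u.coeff 0))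
          else fun _ => false
        (1 / 2 : ℝ) * ∑ a : Fin k → Bool,
            |(Nat.card {u : Polynomial (ZMod p) // u ∈ G ∧ S u = a} : ℝ)
                / (Nat.card G : ℝ) - 1 / ((2 : ℝ) ^ k)|
          ≤ C * Real.sqrt ((2 : ℝ) ^ k / (p : ℝ)) *
              (1 + Real.sqrt (Real.logb 2 (p : ℝ)) / ((p : ℝ) + 1)) := by
  refine ⟨1, one_pos, fun p k hp _ _ => ?_⟩
  intro G lsb S
  have : Fact p.Prime := ⟨hp⟩
  have hS : ∀ u ∈ G, S u = lsb (-u.nextCoeff) :=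
    fun u hu => ite_natDegree_coeff_eq_nextCoeff hu.2 (fun x => lsb (-x)) _
  have hratio (a : Fin k → Bool) : (Nat.card {u // u ∈ G ∧ S u = a} : ℝ) / Nat.card G =
      Nat.card {x : ZMod p // lowBits k x.val = a} / p := by
    rw [Nat.card_congr (Equiv.subtypeEquivRight (q := fun u => u ∈ G ∧ lsb (-u.nextCoeff) = a)
      fun u => and_congr_right fun hu => by rw [hS u hu])]
    exact (card_fiber_div_card_monicDegreeOneOrTwo lsb a).trans (by rw [Nat.card_zmod]; rfl)
  have hcard : Fintype.card (Fin k → Bool) = 2 ^ k := by simp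
  have hSD := half_sum_abs_div_sub_inv_card_le_sqrt
    (fun a => Nat.card {x : ZMod p // lowBits k x.val = a}) hp.pos (sum_card_lowBits_val_fiber p k)
    (fun a => hcard ▸ card_lowBits_val_fiber_mem_Icc p k a)
  rw [hcard] at hSD
  push_cast at hSD
  simp only [hratio]
  calc _ ≤ √(2 ^ k / p) := hSD
    _ ≤ _ := by
      rw [one_mul]
      exact le_mul_of_one_le_right (Real.sqrt_nonneg _) (le_add_of_nonneg_right (by positivity))
end
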